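/- If λ ≥ λ̂ > 0 and m ≥ 0, and Y' = m + Poisson(λ), Ŷ' = Poisson(λ̂), then the ratio R_i = Pr[Y' = i]/Pr[Ŷ' = i] is nondecreasing in i on the support, so the sequence Pr[Y'=i] − Pr[Ŷ'=i] changes sign at most once, and therefore the total variation distance between Y' and Ŷ' equals their Kolmogorov distance. -/

import Mathlib

/-!
The ratios of successive probabilities are `λ / (i - m + 1)` for `Y'` and `λ̂ / (i + 1)` for `Ŷ'`,
and the first dominates the second, so the likelihood ratio is nondecreasing. Hence once
`Pr[Ŷ' = i] ≤ Pr[Y' = i]` it stays so, and such an `i` exists because both laws have mass one.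

For `D = Pr[Y' = ·] - Pr[Ŷ' = ·]`, which sums to zero and is `≤ 0` below the crossing point `k` and
`≥ 0` from `k` on, we get `∑ |D i| = -2 ∑_{i < k} D i`; all partial sums of `D` are `≤ 0`, and the
one up to `k` is the smallest, so the Kolmogorov distance is `-∑_{i < k} D i` as well.
-/

/-- The pmf of `m + Poisson(lam)`. -/
noncomputable def shiftedPoissonPMF (lam : ℝ) (m : ℕ) (i : ℕ) : ℝ :=
  if m ≤ i then Real.exp (-lam) * lam ^ (i - m) / (i - m).factorial else 0

section SingleCrossing

variable {D : ℕ → ℝ} {k : ℕ}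

lemma sum_range_nonpos_of_sign_change (hD : HasSum D 0) (hlow : ∀ i < k, D i ≤ 0)
    (hhigh : ∀ i, k ≤ i → 0 ≤ D i) (x : ℕ) : ∑ i ∈ Finset.range x, D i ≤ 0 := by
  rcases le_total x k with hxk | hkx
  · exact Finset.sum_nonpos fun i hi => hlow i ((Finset.mem_range.1 hi).trans_le hxk)
  · have htail : 0 ≤ ∑' j, D (j + x) := tsum_nonneg fun j => hhigh _ (by omega)
    have hsplit := hD.summable.sum_add_tsum_nat_add x
    rw [hD.tsum_eq] at hsplit
    linarith

lemma sum_range_le_sum_range_of_sign_change (hlow : ∀ i < k, D i ≤ 0) (hhigh : ∀ i, k ≤ i → 0 ≤ D i)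
    (x : ℕ) : ∑ i ∈ Finset.range k, D i ≤ ∑ i ∈ Finset.range x, D i := by
  rcases le_total x k with hxk | hkx
  · rw [← Finset.sum_range_add_sum_Ico D hxk]
    have : ∑ i ∈ Finset.Ico x k, D i ≤ 0 :=
      Finset.sum_nonpos fun i hi => hlow i (Finset.mem_Ico.1 hi).2
    linarith
  · rw [← Finset.sum_range_add_sum_Ico D hkx]
    have : 0 ≤ ∑ i ∈ Finset.Ico k x, D i :=
      Finset.sum_nonneg fun i hi => hhigh i (Finset.mem_Ico.1 hi).1
    linarith

lemma tsum_abs_eq_of_sign_change (hD : HasSum D 0) (hlow : ∀ i < k, D i ≤ 0)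
    (hhigh : ∀ i, k ≤ i → 0 ≤ D i) :
    ∑' i, |D i| = -2 * ∑ i ∈ Finset.range k, D i := by
  have hhead : ∑ i ∈ Finset.range k, |D i| = -∑ i ∈ Finset.range k, D i := by
    rw [← Finset.sum_neg_distrib]
    exact Finset.sum_congr rfl fun i hi => abs_of_nonpos (hlow i (Finset.mem_range.1 hi))
  have htail : ∑' j, |D (j + k)| = ∑' j, D (j + k) :=
    tsum_congr fun j => abs_of_nonneg (hhigh _ (Nat.le_add_left k j))
  have hsplit := hD.summable.sum_add_tsum_nat_add k
  rw [hD.tsum_eq] at hsplit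
  rw [← hD.summable.abs.sum_add_tsum_nat_add k, hhead, htail]
  linarith

lemma iSup_abs_sum_range_eq_of_sign_change (hD : HasSum D 0) (hlow : ∀ i < k, D i ≤ 0)
    (hhigh : ∀ i, k ≤ i → 0 ≤ D i) :
    ⨆ x : ℕ, |∑ i ∈ Finset.range (x + 1), D i| = -∑ i ∈ Finset.range k, D i := by
  have habs : ∀ x, |∑ i ∈ Finset.range x, D i| = -∑ i ∈ Finset.range x, D i := fun x =>
    abs_of_nonpos (sum_range_nonpos_of_sign_change hD hlow hhigh x)
  have hbound : ∀ x, |∑ i ∈ Finset.range x, D i| ≤ -∑ i ∈ Finset.range k, D i := fun x => by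
    rw [habs]
    linarith [sum_range_le_sum_range_of_sign_change hlow hhigh x]
  refine le_antisymm (ciSup_le fun x => hbound (x + 1)) ?_
  refine le_ciSup_of_le ⟨_, Set.forall_mem_range.2 fun x => hbound (x + 1)⟩ (k - 1) ?_
  rcases Nat.eq_zero_or_pos k with rfl | hk
  · simp
  · rw [Nat.sub_add_cancel hk, habs]

theorem half_tsum_abs_eq_iSup_abs_sum_range (hD : HasSum D 0) (hlow : ∀ i < k, D i ≤ 0)
    (hhigh : ∀ i, k ≤ i → 0 ≤ D i) :
    (1 / 2) * ∑' i, |D i| = ⨆ x : ℕ, |∑ i ∈ Finset.range (x + 1), D i| := by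
  rw [tsum_abs_eq_of_sign_change hD hlow hhigh, iSup_abs_sum_range_eq_of_sign_change hD hlow hhigh]
  ring

end SingleCrossing

/-- `hmono` is monotonicity of the likelihood ratio `f / g`, cleared of denominators. -/
theorem exists_sign_change_of_mul_succ_le {f g : ℕ → ℝ} {a : ℝ} (hf : HasSum f a)
    (hg : HasSum g a) (hg_pos : ∀ i, 0 < g i)
    (hmono : ∀ i, f i * g (i + 1) ≤ f (i + 1) * g i) :
    ∃ k, (∀ i < k, f i ≤ g i) ∧ ∀ i, k ≤ i → g i ≤ f i := by
  classical
  have hex : ∃ n, g n ≤ f n := by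
    by_contra! hlt
    exact (hasSum_lt (fun i => (hlt i).le) (hlt 0) hf hg).false
  have hstep : ∀ i, g i ≤ f i → g (i + 1) ≤ f (i + 1) := fun i hi => by
    refine le_of_mul_le_mul_right ?_ (hg_pos i)
    calc g (i + 1) * g i = g i * g (i + 1) := mul_comm _ _
      _ ≤ f i * g (i + 1) := mul_le_mul_of_nonneg_right hi (hg_pos (i + 1)).le
      _ ≤ f (i + 1) * g i := hmono i
  refine ⟨Nat.find hex, fun i hi => (not_le.1 (Nat.find_min hex hi)).le, fun i hi => ?_⟩
  induction i, hi using Nat.le_induction with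
  | base => exact Nat.find_spec hex
  | succ n _ ih => exact hstep n ih

section ShiftedPoisson

lemma shiftedPoissonPMF_of_le {lam : ℝ} {m i : ℕ} (h : m ≤ i) :
    shiftedPoissonPMF lam m i = Real.exp (-lam) * lam ^ (i - m) / (i - m).factorial :=
  if_pos h

lemma shiftedPoissonPMF_of_lt {lam : ℝ} {m i : ℕ} (h : i < m) : shiftedPoissonPMF lam m i = 0 :=
  if_neg (not_le.2 h)

lemma shiftedPoissonPMF_nonneg {lam : ℝ} (hlam : 0 ≤ lam) (m i : ℕ) :
    0 ≤ shiftedPoissonPMF lam m i := by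
  unfold shiftedPoissonPMF
  split <;> positivity

lemma shiftedPoissonPMF_pos {lam : ℝ} (hlam : 0 < lam) {m i : ℕ} (h : m ≤ i) :
    0 < shiftedPoissonPMF lam m i := by
  rw [shiftedPoissonPMF_of_le h]
  positivity

lemma shiftedPoissonPMF_succ (lam : ℝ) {m i : ℕ} (h : m ≤ i) :
    shiftedPoissonPMF lam m (i + 1) = shiftedPoissonPMF lam m i * (lam / ((i - m : ℕ) + 1)) := by
  rw [shiftedPoissonPMF_of_le (h.trans i.le_succ), shiftedPoissonPMF_of_le h,
    Nat.succ_sub h, Nat.factorial_succ, pow_succ]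
  push_cast
  field_simp

lemma hasSum_shiftedPoissonPMF (lam : ℝ) (m : ℕ) : HasSum (shiftedPoissonPMF lam m) 1 := by
  have hpoisson : HasSum (fun n : ℕ => Real.exp (-lam) * lam ^ n / n.factorial) 1 := by
    have h := (NormedSpace.expSeries_div_hasSum_exp lam).mul_left (Real.exp (-lam))
    rw [← Real.exp_eq_exp_ℝ, ← Real.exp_add, neg_add_cancel, Real.exp_zero] at h
    simpa only [mul_div_assoc] using h
  have hshift : HasSum (fun n => shiftedPoissonPMF lam m (n + m)) 1 := by
    simpa only [shiftedPoissonPMF_of_le (Nat.le_add_left m _), Nat.add_sub_cancel] using hpoisson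
  have hhead : ∑ i ∈ Finset.range m, shiftedPoissonPMF lam m i = 0 :=
    Finset.sum_eq_zero fun i hi => shiftedPoissonPMF_of_lt (Finset.mem_range.1 hi)
  simpa [hhead] using (hasSum_nat_add_iff m).1 hshift

lemma shiftedPoissonPMF_mul_succ_le {lam lamh : ℝ} (hlamh : 0 ≤ lamh) (hge : lamh ≤ lam)
    (m i : ℕ) :
    shiftedPoissonPMF lam m i * shiftedPoissonPMF lamh 0 (i + 1) ≤
      shiftedPoissonPMF lam m (i + 1) * shiftedPoissonPMF lamh 0 i := by
  have hlam : 0 ≤ lam := hlamh.trans hge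
  rcases lt_or_ge i m with him | hmi
  · rw [shiftedPoissonPMF_of_lt him, zero_mul]
    exact mul_nonneg (shiftedPoissonPMF_nonneg hlam m _) (shiftedPoissonPMF_nonneg hlamh 0 i)
  have hratio : lamh / ((i - 0 : ℕ) + 1) ≤ lam / ((i - m : ℕ) + 1) :=
    div_le_div₀ hlam hge (by positivity) (by gcongr; omega)
  rw [shiftedPoissonPMF_succ lam hmi, shiftedPoissonPMF_succ lamh i.zero_le, ← mul_assoc,
    mul_right_comm _ _ (shiftedPoissonPMF lamh 0 i)]
  exact mul_le_mul_of_nonneg_left hratio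
    (mul_nonneg (shiftedPoissonPMF_nonneg hlam m i) (shiftedPoissonPMF_nonneg hlamh 0 i))

end ShiftedPoisson

/-- For `λ ≥ λ̂ > 0` and `m ≥ 0`, with `Y' = m + Poisson(λ)` and `Ŷ' = Poisson(λ̂)`:
the likelihood ratio is nondecreasing on the support, the difference of pmfs changes sign
at most once, and hence the total variation distance equals the Kolmogorov distance. -/
theorem stmt7 (lam lamh : ℝ) (hlamh : 0 < lamh) (hge : lamh ≤ lam) (m : ℕ) :
    (∀ i : ℕ, m ≤ i →
      shiftedPoissonPMF lam m i / shiftedPoissonPMF lamh 0 i ≤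
        shiftedPoissonPMF lam m (i + 1) / shiftedPoissonPMF lamh 0 (i + 1)) ∧
    (∃ istar : ℕ,
      (∀ i < istar, shiftedPoissonPMF lam m i ≤ shiftedPoissonPMF lamh 0 i) ∧
      (∀ i, istar ≤ i → shiftedPoissonPMF lamh 0 i ≤ shiftedPoissonPMF lam m i)) ∧
    (1 / 2) * ∑' i : ℕ, |shiftedPoissonPMF lam m i - shiftedPoissonPMF lamh 0 i| =
      ⨆ x : ℕ,
        |∑ i ∈ Finset.range (x + 1),
          (shiftedPoissonPMF lam m i - shiftedPoissonPMF lamh 0 i)| := by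
  have hg_pos : ∀ i, 0 < shiftedPoissonPMF lamh 0 i := fun i =>
    shiftedPoissonPMF_pos hlamh i.zero_le
  have hmono := shiftedPoissonPMF_mul_succ_le hlamh.le hge m
  obtain ⟨k, hlow, hhigh⟩ := exists_sign_change_of_mul_succ_le
    (hasSum_shiftedPoissonPMF lam m) (hasSum_shiftedPoissonPMF lamh 0) hg_pos hmono
  refine ⟨fun i _ => (div_le_div_iff₀ (hg_pos i) (hg_pos (i + 1))).2 (hmono i),
    ⟨k, hlow, hhigh⟩, ?_⟩
  refine half_tsum_abs_eq_iSup_abs_sum_range ?_ (fun i hi => sub_nonpos.2 (hlow i hi))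
    (fun i hi => sub_nonneg.2 (hhigh i hi))
  simpa using (hasSum_shiftedPoissonPMF lam m).sub (hasSum_shiftedPoissonPMF lamh 0)
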